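/- arXiv:2507.21935 — 4 statements merged into one kernel-verified Lean document; each statement's English description precedes it below -/
import Mathlib

section
/- Let λ be a partition of N with Frobenius coordinates α_1 > … > α_J ≥ 0 and β_1 > … > β_J ≥ 0, and let X^λ, Z^λ be the associated N×N complex matrices and a, b the associated row and column vectors. Then X^λ Z^λ − Z^λ X^λ − I = b a. -/
open Finset Matrix MeasureTheory

noncomputable section

/-- The elementary matrix with a single 1 in (0-indexed) row `p`, column `q`
(the zero matrix if `p` or `q` is out of range). -/
def Emat (N p q : ℕ) : Matrix (Fin N) (Fin N) ℂ :=
  Matrix.of fun i j => if (i : ℕ) = p ∧ (j : ℕ) = q then 1 else 0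

/-- The standard basis vector with a 1 in (0-indexed) position `p`. -/
def eVec (N p : ℕ) : Fin N → ℂ := fun i => if (i : ℕ) = p then 1 else 0

/-- Offset of the `k`-th diagonal block, where block `k` has size `N_k = α k + β k + 1`. -/
def off (α β : ℕ → ℕ) (k : ℕ) : ℕ := ∑ j ∈ Finset.range k, (α j + β j + 1)

/-- The matrix `X^λ` built from the Frobenius coordinates `α`, `β` (0-indexed) of a partition. -/
def CMX (J : ℕ) (α β : ℕ → ℕ) (N : ℕ) : Matrix (Fin N) (Fin N) ℂ :=
  (∑ i ∈ Finset.range J,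
      ((- ∑ n ∈ Finset.range (β i), ((n : ℂ) + 1) •
            Emat N (off α β i + n + 1) (off α β i + n))
        + ∑ n ∈ Finset.range (α i), ((n : ℂ) + 1) •
            Emat N (off α β i + (α i + β i + 1) - n - 1)
                   (off α β i + (α i + β i + 1) - n - 2)))
  + (∑ i ∈ Finset.range J, ∑ j ∈ Finset.range J,
      if i < j then
        ((α j + β j + 1 : ℕ) : ℂ) • ∑ n ∈ Finset.range (α j + 1),
          Emat N (off α β i + β i + 1 + n) (off α β j + β j + n)
      else 0)
  + (∑ i ∈ Finset.range J, ∑ j ∈ Finset.range J,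
      if j < i then
        (-((α j + β j + 1 : ℕ) : ℂ)) • ∑ n ∈ Finset.range (β i + 1),
          Emat N (off α β i + β i - n) (off α β j + β j - n - 1)
      else 0)

/-- The matrix `Z^λ` built from the Frobenius coordinates `α`, `β` of a partition. -/
def CMZ (J : ℕ) (α β : ℕ → ℕ) (N : ℕ) : Matrix (Fin N) (Fin N) ℂ :=
  ∑ i ∈ Finset.range J, ∑ n ∈ Finset.range (α i + β i),
    Emat N (off α β i + n) (off α β i + n + 1)

/-- The column vector `b` whose `i`-th block is the standard basis vector `e_{β_i+1}`. -/
def CMb (J : ℕ) (α β : ℕ → ℕ) (N : ℕ) : Fin N → ℂ :=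
  ∑ i ∈ Finset.range J, eVec N (off α β i + β i)

/-- The row vector `a` whose `i`-th block is `-N_i e_{β_i+1}^T`. -/
def CMa (J : ℕ) (α β : ℕ → ℕ) (N : ℕ) : Fin N → ℂ :=
  ∑ i ∈ Finset.range J, (-((α i + β i + 1 : ℕ) : ℂ)) • eVec N (off α β i + β i)

lemma Emat_mul_same {N : ℕ} (p q s : ℕ) (hq : q < N) :
    Emat N p q * Emat N q s = Emat N p s := by
  ext i j
  simp only [Emat, Matrix.mul_apply, Matrix.of_apply]
  rw [Finset.sum_eq_single (⟨q, hq⟩ : Fin N)]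
  · by_cases h1 : (i:ℕ) = p <;> by_cases h2 : (j:ℕ) = s <;> simp [h1, h2]
  · intro k _ hk
    have : (k : ℕ) ≠ q := fun h => hk (Fin.ext h)
    simp [this]
  · simp

lemma Emat_mul_ne {N : ℕ} (p q r s : ℕ) (h : q ≠ r) :
    Emat N p q * Emat N r s = 0 := by
  ext i j
  simp only [Emat, Matrix.mul_apply, Matrix.of_apply, Matrix.zero_apply]
  apply Finset.sum_eq_zero
  intro k _
  by_cases hk : (k : ℕ) = q
  · simp [hk, h]
  · simp [hk]

lemma off_succX (α β : ℕ → ℕ) (k : ℕ) : off α β (k+1) = off α β k + (α k + β k + 1) :=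
  Finset.sum_range_succ _ k

lemma off_monoX (α β : ℕ → ℕ) {i j : ℕ} (h : i ≤ j) : off α β i ≤ off α β j :=
  Finset.sum_le_sum_of_subset (Finset.range_subset_range.2 h)

lemma off_add_leX (α β : ℕ → ℕ) {i j : ℕ} (h : i < j) :
    off α β i + (α i + β i + 1) ≤ off α β j := by
  rw [← off_succX]
  exact off_monoX α β h

lemma off_ltX (α β : ℕ → ℕ) {J N i n : ℕ} (hN : N = off α β J) (hi : i < J)
    (hn : n < α i + β i + 1) : off α β i + n < N := by
  have h1 : off α β i + n < off α β i + (α i + β i + 1) := by omega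
  have h2 : off α β (i+1) ≤ off α β J := off_monoX α β hi
  rw [off_succX] at h2
  omega

lemma blocks_neX (α β : ℕ → ℕ) {i j n m : ℕ} (hij : i ≠ j)
    (hn : n < α i + β i + 1) (hm : m < α j + β j + 1) :
    off α β i + n ≠ off α β j + m := by
  rcases Nat.lt_or_ge i j with h | h
  · have := off_add_leX α β h; omega
  · have hji : j < i := by omega
    have := off_add_leX α β hji; omega

lemma Emul_ZX {J N : ℕ} (α β : ℕ → ℕ) (hN : N = off α β J) {ic nc : ℕ}
    (hic : ic < J) (hnc : nc < α ic + β ic + 1) (r : ℕ) :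
    Emat N r (off α β ic + nc) * CMZ J α β N =
      if nc < α ic + β ic then Emat N r (off α β ic + nc + 1) else 0 := by
  unfold CMZ
  rw [Finset.mul_sum, Finset.sum_eq_single_of_mem ic (Finset.mem_range.2 hic)]
  · rw [Finset.mul_sum]
    by_cases h : nc < α ic + β ic
    · rw [if_pos h, Finset.sum_eq_single_of_mem nc (Finset.mem_range.2 h)]
      · have := Emat_mul_same (N := N) r (off α β ic + nc) (off α β ic + nc + 1)
          (off_ltX α β hN hic hnc)
        exact this
      · intro m _ hm
        exact Emat_mul_ne _ _ _ _ (by omega)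
    · rw [if_neg h]
      apply Finset.sum_eq_zero
      intro m hm
      rw [Finset.mem_range] at hm
      exact Emat_mul_ne _ _ _ _ (by omega)
  · intro i' _ hne
    rw [Finset.mul_sum]
    apply Finset.sum_eq_zero
    intro m hm
    rw [Finset.mem_range] at hm
    exact Emat_mul_ne _ _ _ _ (blocks_neX α β (Ne.symm hne) hnc (by omega))

lemma Z_mul_EX {J N : ℕ} (α β : ℕ → ℕ) (hN : N = off α β J) {ir nr : ℕ}
    (hir : ir < J) (hnr : nr < α ir + β ir + 1) (c : ℕ) :
    CMZ J α β N * Emat N (off α β ir + nr) c =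
      if 0 < nr then Emat N (off α β ir + (nr - 1)) c else 0 := by
  unfold CMZ
  rw [Finset.sum_mul, Finset.sum_eq_single_of_mem ir (Finset.mem_range.2 hir)]
  · rw [Finset.sum_mul]
    by_cases h : 0 < nr
    · rw [if_pos h, Finset.sum_eq_single_of_mem (nr - 1) (Finset.mem_range.2 (by omega))]
      · have he : off α β ir + (nr - 1) + 1 = off α β ir + nr := by omega
        rw [he]
        exact Emat_mul_same _ _ _ (off_ltX α β hN hir hnr)
      · intro m _ hm
        exact Emat_mul_ne _ _ _ _ (by omega)
    · rw [if_neg h]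
      apply Finset.sum_eq_zero
      intro m hm
      rw [Finset.mem_range] at hm
      exact Emat_mul_ne _ _ _ _ (by omega)
  · intro i' hi' hne
    rw [Finset.sum_mul]
    apply Finset.sum_eq_zero
    intro m hm
    rw [Finset.mem_range] at hm
    rw [Finset.mem_range] at hi'
    exact Emat_mul_ne _ _ _ _
      (show off α β i' + m + 1 ≠ off α β ir + nr from by
        have : off α β i' + (m + 1) ≠ off α β ir + nr :=
          blocks_neX α β hne (by omega) hnr
        omega)

lemma telescopeX {M : Type*} [AddCommGroup M] [Module ℂ M] (f : ℕ → M) (b : ℕ) :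
    ∑ n ∈ Finset.range b, ((n : ℂ) + 1) • (f n - f (n + 1)) =
      (∑ n ∈ Finset.range b, f n) - (b : ℂ) • f b := by
  induction b with
  | zero => simp
  | succ b ih =>
    rw [Finset.sum_range_succ, ih, Finset.sum_range_succ]
    push_cast
    rw [smul_sub, add_smul, one_smul]
    abel

lemma exists_blockX (α β : ℕ → ℕ) {J x : ℕ} (hx : x < off α β J) :
    ∃ i, i < J ∧ off α β i ≤ x ∧ x < off α β i + (α i + β i + 1) := by
  induction J with
  | zero => simp [off] at hx
  | succ J ih =>
    by_cases h : x < off α β J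
    · obtain ⟨i, h1, h2, h3⟩ := ih h
      exact ⟨i, by omega, h2, h3⟩
    · rw [off_succX] at hx
      exact ⟨J, by omega, by omega, by omega⟩

lemma sum_diag_one {J N : ℕ} (α β : ℕ → ℕ) (hN : N = off α β J) :
    ∑ i ∈ Finset.range J, ∑ n ∈ Finset.range (α i + β i + 1),
      Emat N (off α β i + n) (off α β i + n) = (1 : Matrix (Fin N) (Fin N) ℂ) := by
  ext p q
  obtain ⟨i0, hi0, hle, hlt⟩ := exists_blockX α β (x := (p : ℕ)) (by rw [← hN]; exact p.isLt)
  set n0 := (p : ℕ) - off α β i0 with hn0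
  have hp : (p : ℕ) = off α β i0 + n0 := by omega
  simp only [Matrix.sum_apply]
  rw [Finset.sum_eq_single_of_mem i0 (Finset.mem_range.2 hi0)]
  · rw [Finset.sum_eq_single_of_mem n0 (Finset.mem_range.2 (by omega))]
    · simp only [Emat, Matrix.of_apply, Matrix.one_apply, hp, Fin.ext_iff]
      by_cases hq : (q : ℕ) = off α β i0 + n0 <;> simp [hq, eq_comm]
    · intro m _ hm
      simp only [Emat, Matrix.of_apply]
      rw [if_neg]
      rintro ⟨h1, -⟩
      omega
  · intro i hi hne
    apply Finset.sum_eq_zero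
    intro m hm
    rw [Finset.mem_range] at hi hm
    simp only [Emat, Matrix.of_apply]
    rw [if_neg]
    rintro ⟨h1, -⟩
    have := blocks_neX α β (Ne.symm hne) (show n0 < α i0 + β i0 + 1 by omega) hm
    omega

lemma partA {J N : ℕ} (α β : ℕ → ℕ) (hN : N = off α β J) {i : ℕ} (hi : i < J) :
    ((- ∑ n ∈ Finset.range (β i), ((n : ℂ) + 1) •
          Emat N (off α β i + n + 1) (off α β i + n))
      + ∑ n ∈ Finset.range (α i), ((n : ℂ) + 1) •
          Emat N (off α β i + (α i + β i + 1) - n - 1)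
                 (off α β i + (α i + β i + 1) - n - 2)) * CMZ J α β N
    - CMZ J α β N *
      ((- ∑ n ∈ Finset.range (β i), ((n : ℂ) + 1) •
          Emat N (off α β i + n + 1) (off α β i + n))
      + ∑ n ∈ Finset.range (α i), ((n : ℂ) + 1) •
          Emat N (off α β i + (α i + β i + 1) - n - 1)
                 (off α β i + (α i + β i + 1) - n - 2))
    = (∑ n ∈ Finset.range (α i + β i + 1),
        Emat N (off α β i + n) (off α β i + n))
      - ((α i + β i + 1 : ℕ) : ℂ) •
        Emat N (off α β i + β i) (off α β i + β i) := by
  set o := off α β i with ho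
  -- rewrite the A2 indices without truncated subtraction
  have hA2 : ∑ n ∈ Finset.range (α i), ((n : ℂ) + 1) •
          Emat N (o + (α i + β i + 1) - n - 1) (o + (α i + β i + 1) - n - 2)
      = ∑ n ∈ Finset.range (α i), ((n : ℂ) + 1) •
          Emat N (o + (α i + β i - n)) (o + (α i + β i - n - 1)) := by
    apply Finset.sum_congr rfl
    intro n hn
    rw [Finset.mem_range] at hn
    rw [show o + (α i + β i + 1) - n - 1 = o + (α i + β i - n) from by omega,
      show o + (α i + β i + 1) - n - 2 = o + (α i + β i - n - 1) from by omega]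
  have hA1Z : (∑ n ∈ Finset.range (β i), ((n : ℂ) + 1) •
        Emat N (o + n + 1) (o + n)) * CMZ J α β N
      = ∑ n ∈ Finset.range (β i), ((n : ℂ) + 1) •
        Emat N (o + (n + 1)) (o + (n + 1)) := by
    rw [Finset.sum_mul]
    apply Finset.sum_congr rfl
    intro n hn
    rw [Finset.mem_range] at hn
    rw [smul_mul_assoc, Emul_ZX α β hN hi (nc := n) (by omega), if_pos (by omega)]
    rfl
  have hZA1 : CMZ J α β N * (∑ n ∈ Finset.range (β i), ((n : ℂ) + 1) •
        Emat N (o + n + 1) (o + n))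
      = ∑ n ∈ Finset.range (β i), ((n : ℂ) + 1) • Emat N (o + n) (o + n) := by
    rw [Finset.mul_sum]
    apply Finset.sum_congr rfl
    intro n hn
    rw [Finset.mem_range] at hn
    rw [mul_smul_comm]
    have he : o + n + 1 = o + (n + 1) := by omega
    rw [he, Z_mul_EX α β hN hi (nr := n + 1) (by omega), if_pos (by omega)]
    rfl
  have hA2Z : (∑ n ∈ Finset.range (α i), ((n : ℂ) + 1) •
        Emat N (o + (α i + β i - n)) (o + (α i + β i - n - 1))) * CMZ J α β N
      = ∑ n ∈ Finset.range (α i), ((n : ℂ) + 1) •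
        Emat N (o + (α i + β i - n)) (o + (α i + β i - n)) := by
    rw [Finset.sum_mul]
    apply Finset.sum_congr rfl
    intro n hn
    rw [Finset.mem_range] at hn
    rw [smul_mul_assoc, Emul_ZX α β hN hi (nc := α i + β i - n - 1) (by omega),
      if_pos (by omega), show o + (α i + β i - n - 1) + 1 = o + (α i + β i - n) from by omega]
  have hZA2 : CMZ J α β N * (∑ n ∈ Finset.range (α i), ((n : ℂ) + 1) •
        Emat N (o + (α i + β i - n)) (o + (α i + β i - n - 1)))
      = ∑ n ∈ Finset.range (α i), ((n : ℂ) + 1) •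
        Emat N (o + (α i + β i - (n + 1))) (o + (α i + β i - (n + 1))) := by
    rw [Finset.mul_sum]
    apply Finset.sum_congr rfl
    intro n hn
    rw [Finset.mem_range] at hn
    rw [mul_smul_comm, Z_mul_EX α β hN hi (nr := α i + β i - n) (by omega),
      if_pos (by omega), show α i + β i - n - 1 = α i + β i - (n + 1) from by omega]
  rw [hA2, add_mul, neg_mul, mul_add, mul_neg, hA1Z, hZA1, hA2Z, hZA2]
  have t1 : (∑ n ∈ Finset.range (β i), ((n : ℂ) + 1) • Emat N (o + n) (o + n))
      - ∑ n ∈ Finset.range (β i), ((n : ℂ) + 1) • Emat N (o + (n + 1)) (o + (n + 1))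
      = (∑ n ∈ Finset.range (β i), Emat N (o + n) (o + n))
        - (β i : ℂ) • Emat N (o + β i) (o + β i) := by
    rw [← Finset.sum_sub_distrib]
    simp_rw [← smul_sub]
    exact telescopeX (fun m => Emat N (o + m) (o + m)) (β i)
  have t2 : (∑ n ∈ Finset.range (α i), ((n : ℂ) + 1) •
        Emat N (o + (α i + β i - n)) (o + (α i + β i - n)))
      - ∑ n ∈ Finset.range (α i), ((n : ℂ) + 1) •
        Emat N (o + (α i + β i - (n + 1))) (o + (α i + β i - (n + 1)))
      = (∑ n ∈ Finset.range (α i),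
          Emat N (o + (α i + β i - n)) (o + (α i + β i - n)))
        - (α i : ℂ) • Emat N (o + β i) (o + β i) := by
    rw [← Finset.sum_sub_distrib]
    simp_rw [← smul_sub]
    have := telescopeX (fun m => Emat N (o + (α i + β i - m)) (o + (α i + β i - m))) (α i)
    simp only [show α i + β i - α i = β i from by omega] at this
    exact this
  have t3 : (∑ n ∈ Finset.range (α i),
        Emat N (o + (α i + β i - n)) (o + (α i + β i - n)))
      = ∑ n ∈ Finset.range (α i),
        Emat N (o + (β i + 1 + n)) (o + (β i + 1 + n)) := by
    rw [← Finset.sum_range_reflect (fun n => Emat N (o + (β i + 1 + n)) (o + (β i + 1 + n)))]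
    apply Finset.sum_congr rfl
    intro n hn
    rw [Finset.mem_range] at hn
    rw [show β i + 1 + (α i - 1 - n) = α i + β i - n from by omega]
  have t4 : (∑ n ∈ Finset.range (α i + β i + 1), Emat N (o + n) (o + n))
      = (∑ n ∈ Finset.range (β i), Emat N (o + n) (o + n))
        + Emat N (o + β i) (o + β i)
        + ∑ n ∈ Finset.range (α i),
            Emat N (o + (β i + 1 + n)) (o + (β i + 1 + n)) := by
    rw [show α i + β i + 1 = (β i + 1) + α i from by omega, Finset.sum_range_add,
      Finset.sum_range_succ]
  have key : ∀ A B C D : Matrix (Fin N) (Fin N) ℂ, -A + B - (-C + D) = (C - A) + (B - D) := by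
    intro A B C D; abel
  rw [key, t1, t2, t3, t4]
  push_cast
  rw [add_smul, add_smul, one_smul]
  abel

lemma partB {J N : ℕ} (α β : ℕ → ℕ) (hN : N = off α β J) {i j : ℕ}
    (hij : i < j) (hj : j < J) (hαij : α j < α i) :
    (∑ n ∈ Finset.range (α j + 1),
        Emat N (off α β i + β i + 1 + n) (off α β j + β j + n)) * CMZ J α β N
    - CMZ J α β N * (∑ n ∈ Finset.range (α j + 1),
        Emat N (off α β i + β i + 1 + n) (off α β j + β j + n))
    = - Emat N (off α β i + β i) (off α β j + β j) := by
  have hi : i < J := lt_trans hij hj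
  have hUZ : (∑ n ∈ Finset.range (α j + 1),
        Emat N (off α β i + β i + 1 + n) (off α β j + β j + n)) * CMZ J α β N
      = ∑ n ∈ Finset.range (α j),
        Emat N (off α β i + (β i + (n + 1))) (off α β j + (β j + (n + 1))) := by
    rw [Finset.sum_mul, Finset.sum_range_succ,
      show off α β j + β j + α j = off α β j + (β j + α j) from by omega,
      Emul_ZX α β hN hj (nc := β j + α j) (by omega), if_neg (by omega), add_zero]
    apply Finset.sum_congr rfl
    intro n hn
    rw [Finset.mem_range] at hn
    rw [show off α β j + β j + n = off α β j + (β j + n) from by omega,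
      Emul_ZX α β hN hj (nc := β j + n) (by omega), if_pos (by omega),
      show off α β j + (β j + n) + 1 = off α β j + (β j + (n + 1)) from by omega,
      show off α β i + β i + 1 + n = off α β i + (β i + (n + 1)) from by omega]
  have hZU : CMZ J α β N * (∑ n ∈ Finset.range (α j + 1),
        Emat N (off α β i + β i + 1 + n) (off α β j + β j + n))
      = ∑ n ∈ Finset.range (α j + 1),
        Emat N (off α β i + (β i + n)) (off α β j + (β j + n)) := by
    rw [Finset.mul_sum]
    apply Finset.sum_congr rfl
    intro n hn
    rw [Finset.mem_range] at hn
    rw [show off α β i + β i + 1 + n = off α β i + (β i + 1 + n) from by omega,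
      Z_mul_EX α β hN hi (nr := β i + 1 + n) (by omega), if_pos (by omega),
      show β i + 1 + n - 1 = β i + n from by omega,
      show off α β j + β j + n = off α β j + (β j + n) from by omega]
  rw [hUZ, hZU, Finset.sum_range_succ' _ (α j)]
  simp only [add_zero]
  abel

lemma partC {J N : ℕ} (α β : ℕ → ℕ) (hN : N = off α β J) {i j : ℕ}
    (hij : j < i) (hi : i < J) (hβij : β i < β j) :
    (∑ n ∈ Finset.range (β i + 1),
        Emat N (off α β i + β i - n) (off α β j + β j - n - 1)) * CMZ J α β N
    - CMZ J α β N * (∑ n ∈ Finset.range (β i + 1),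
        Emat N (off α β i + β i - n) (off α β j + β j - n - 1))
    = Emat N (off α β i + β i) (off α β j + β j) := by
  have hj : j < J := lt_trans hij hi
  have hLZ : (∑ n ∈ Finset.range (β i + 1),
        Emat N (off α β i + β i - n) (off α β j + β j - n - 1)) * CMZ J α β N
      = ∑ n ∈ Finset.range (β i + 1),
        Emat N (off α β i + (β i - n)) (off α β j + (β j - n)) := by
    rw [Finset.sum_mul]
    apply Finset.sum_congr rfl
    intro n hn
    rw [Finset.mem_range] at hn
    rw [show off α β j + β j - n - 1 = off α β j + (β j - n - 1) from by omega,
      Emul_ZX α β hN hj (nc := β j - n - 1) (by omega), if_pos (by omega),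
      show off α β j + (β j - n - 1) + 1 = off α β j + (β j - n) from by omega,
      show off α β i + β i - n = off α β i + (β i - n) from by omega]
  have hZL : CMZ J α β N * (∑ n ∈ Finset.range (β i + 1),
        Emat N (off α β i + β i - n) (off α β j + β j - n - 1))
      = ∑ n ∈ Finset.range (β i),
        Emat N (off α β i + (β i - (n + 1))) (off α β j + (β j - (n + 1))) := by
    rw [Finset.mul_sum, Finset.sum_range_succ,
      show off α β i + β i - β i = off α β i + 0 from by omega,
      Z_mul_EX α β hN hi (nr := 0) (by omega), if_neg (by omega), add_zero]
    apply Finset.sum_congr rfl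
    intro n hn
    rw [Finset.mem_range] at hn
    rw [show off α β i + β i - n = off α β i + (β i - n) from by omega,
      Z_mul_EX α β hN hi (nr := β i - n) (by omega), if_pos (by omega),
      show β i - n - 1 = β i - (n + 1) from by omega,
      show off α β j + β j - n - 1 = off α β j + (β j - (n + 1)) from by omega]
  rw [hLZ, hZL, Finset.sum_range_succ' _ (β i)]
  have hrw : ∀ n, n < β i →
      Emat N (off α β i + (β i - (n + 1))) (off α β j + (β j - (n + 1)))
      = Emat N (off α β i + (β i - (n + 1))) (off α β j + (β j - (n + 1))) := fun _ _ => rfl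
  simp only [Nat.sub_zero]
  abel


lemma rhs_eq {J N : ℕ} (α β : ℕ → ℕ) :
    Matrix.vecMulVec (CMb J α β N) (CMa J α β N)
      = ∑ i ∈ Finset.range J, ∑ j ∈ Finset.range J,
          (-((α j + β j + 1 : ℕ) : ℂ)) • Emat N (off α β i + β i) (off α β j + β j) := by
  ext p q
  simp only [Matrix.vecMulVec_apply, CMb, CMa, Finset.sum_apply, Pi.smul_apply,
    smul_eq_mul, Matrix.sum_apply, Matrix.smul_apply, eVec, Emat, Matrix.of_apply]
  rw [Finset.sum_mul_sum]
  apply Finset.sum_congr rfl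
  intro i _
  apply Finset.sum_congr rfl
  intro j _
  by_cases h1 : (p : ℕ) = off α β i + β i <;>
    by_cases h2 : (q : ℕ) = off α β j + β j <;>
    simp [h1, h2]


/-- For a partition of `N` with Frobenius coordinates
`α_1 > … > α_J ≥ 0`, `β_1 > … > β_J ≥ 0` (so `N = ∑ (α_k + β_k + 1)`),
the associated matrices satisfy `X^λ Z^λ - Z^λ X^λ - I = b a`. -/
theorem frobenius_CM_rank_one_identity (J N : ℕ) (α β : ℕ → ℕ)
    (hα : ∀ i j, i < j → j < J → α j < α i)
    (hβ : ∀ i j, i < j → j < J → β j < β i)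
    (hN : N = ∑ k ∈ Finset.range J, (α k + β k + 1)) :
    CMX J α β N * CMZ J α β N - CMZ J α β N * CMX J α β N - 1
      = Matrix.vecMulVec (CMb J α β N) (CMa J α β N) := by
  have hN' : N = off α β J := hN
  set Z := CMZ J α β N with hZ
  set X1 := ∑ i ∈ Finset.range J,
      ((- ∑ n ∈ Finset.range (β i), ((n : ℂ) + 1) •
            Emat N (off α β i + n + 1) (off α β i + n))
        + ∑ n ∈ Finset.range (α i), ((n : ℂ) + 1) •
            Emat N (off α β i + (α i + β i + 1) - n - 1)
                   (off α β i + (α i + β i + 1) - n - 2)) with hX1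
  set X2 := ∑ i ∈ Finset.range J, ∑ j ∈ Finset.range J,
      (if i < j then
        ((α j + β j + 1 : ℕ) : ℂ) • ∑ n ∈ Finset.range (α j + 1),
          Emat N (off α β i + β i + 1 + n) (off α β j + β j + n)
      else 0) with hX2
  set X3 := ∑ i ∈ Finset.range J, ∑ j ∈ Finset.range J,
      (if j < i then
        (-((α j + β j + 1 : ℕ) : ℂ)) • ∑ n ∈ Finset.range (β i + 1),
          Emat N (off α β i + β i - n) (off α β j + β j - n - 1)
      else 0) with hX3
  have hX : CMX J α β N = X1 + X2 + X3 := rfl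
  -- part 1
  have h1 : X1 * Z - Z * X1
      = 1 - ∑ i ∈ Finset.range J, ((α i + β i + 1 : ℕ) : ℂ) •
          Emat N (off α β i + β i) (off α β i + β i) := by
    rw [hX1, Finset.sum_mul, Finset.mul_sum, ← Finset.sum_sub_distrib]
    rw [Finset.sum_congr rfl (fun i hi => partA α β hN' (Finset.mem_range.1 hi))]
    rw [Finset.sum_sub_distrib, sum_diag_one α β hN']
  -- part 2
  have h2 : X2 * Z - Z * X2
      = ∑ i ∈ Finset.range J, ∑ j ∈ Finset.range J,
          (if i < j then (-((α j + β j + 1 : ℕ) : ℂ)) •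
            Emat N (off α β i + β i) (off α β j + β j) else 0) := by
    rw [hX2, Finset.sum_mul, Finset.mul_sum, ← Finset.sum_sub_distrib]
    apply Finset.sum_congr rfl
    intro i hi
    rw [Finset.sum_mul, Finset.mul_sum, ← Finset.sum_sub_distrib]
    apply Finset.sum_congr rfl
    intro j hj
    rw [Finset.mem_range] at hi hj
    by_cases hij : i < j
    · rw [if_pos hij, if_pos hij, smul_mul_assoc, mul_smul_comm, ← smul_sub,
        partB α β hN' hij hj (hα i j hij hj), smul_neg, ← neg_smul]
    · rw [if_neg hij, if_neg hij, zero_mul, mul_zero, sub_zero]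
  -- part 3
  have h3 : X3 * Z - Z * X3
      = ∑ i ∈ Finset.range J, ∑ j ∈ Finset.range J,
          (if j < i then (-((α j + β j + 1 : ℕ) : ℂ)) •
            Emat N (off α β i + β i) (off α β j + β j) else 0) := by
    rw [hX3, Finset.sum_mul, Finset.mul_sum, ← Finset.sum_sub_distrib]
    apply Finset.sum_congr rfl
    intro i hi
    rw [Finset.sum_mul, Finset.mul_sum, ← Finset.sum_sub_distrib]
    apply Finset.sum_congr rfl
    intro j hj
    rw [Finset.mem_range] at hi hj
    by_cases hij : j < i
    · rw [if_pos hij, if_pos hij, smul_mul_assoc, mul_smul_comm, ← smul_sub,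
        partC α β hN' hij hi (hβ j i hij hi)]
    · rw [if_neg hij, if_neg hij, zero_mul, mul_zero, sub_zero]
  -- combine
  have hsplit : ∑ i ∈ Finset.range J, ∑ j ∈ Finset.range J,
        (-((α j + β j + 1 : ℕ) : ℂ)) • Emat N (off α β i + β i) (off α β j + β j)
      = (∑ i ∈ Finset.range J, ∑ j ∈ Finset.range J,
          (if i < j then (-((α j + β j + 1 : ℕ) : ℂ)) •
            Emat N (off α β i + β i) (off α β j + β j) else 0))
        + (∑ i ∈ Finset.range J, ∑ j ∈ Finset.range J,
          (if j < i then (-((α j + β j + 1 : ℕ) : ℂ)) •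
            Emat N (off α β i + β i) (off α β j + β j) else 0))
        + (- ∑ i ∈ Finset.range J, ((α i + β i + 1 : ℕ) : ℂ) •
            Emat N (off α β i + β i) (off α β i + β i)) := by
    have step : ∀ i ∈ Finset.range J, ∀ j ∈ Finset.range J,
        (-((α j + β j + 1 : ℕ) : ℂ)) • Emat N (off α β i + β i) (off α β j + β j)
        = (if i < j then (-((α j + β j + 1 : ℕ) : ℂ)) •
            Emat N (off α β i + β i) (off α β j + β j) else 0)
          + (if j < i then (-((α j + β j + 1 : ℕ) : ℂ)) •
            Emat N (off α β i + β i) (off α β j + β j) else 0)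
          + (if j = i then (-((α j + β j + 1 : ℕ) : ℂ)) •
            Emat N (off α β i + β i) (off α β j + β j) else 0) := by
      intro i _ j _
      rcases lt_trichotomy i j with h | h | h
      · simp [h, asymm h, Nat.ne_of_gt h]
      · simp [h, lt_irrefl]
      · simp [h, asymm h, Nat.ne_of_lt h, not_lt_of_gt h]
    rw [Finset.sum_congr rfl (fun i hi => Finset.sum_congr rfl (step i hi))]
    simp only [Finset.sum_add_distrib]
    congr 1
    rw [← Finset.sum_neg_distrib]
    apply Finset.sum_congr rfl
    intro i hi
    rw [Finset.sum_ite_eq' (Finset.range J) i, if_pos hi, neg_smul]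
  have expand : (X1 + X2 + X3) * Z - Z * (X1 + X2 + X3) - 1
      = (X1 * Z - Z * X1) + (X2 * Z - Z * X2) + (X3 * Z - Z * X3) - 1 := by
    noncomm_ring
  rw [hX, expand, h1, h2, h3, rhs_eq, hsplit]
  abel
end
end

section
/- For every partition λ of N, every n ∈ I^λ, and all t, x, y ∈ ℂ: H_n^{(λ)}(t x, t² y) = t^n H_n^{(λ)}(x, y); that is, H_n^{(λ)} is homogeneous of weighted degree n when x is given weight 1 and y is given weight 2. -/
open Finset Matrix MeasureTheory

noncomputable section

/-- The bivariate Hermite polynomial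
`H n x y = n! * ∑_{0 ≤ 2k ≤ n} x^(n-2k) y^k / (k! (n-2k)!)`. -/
def Herm (n : ℕ) (x y : ℂ) : ℂ :=
  (n.factorial : ℂ) * ∑ k ∈ Finset.range (n / 2 + 1),
    x ^ (n - 2 * k) * y ^ k / ((k.factorial : ℂ) * ((n - 2 * k).factorial : ℂ))

/-- The Wronskian determinant of `r` functions of one complex variable. -/
def Wr (r : ℕ) (g : Fin r → ℂ → ℂ) (x : ℂ) : ℂ :=
  Matrix.det (Matrix.of fun i j : Fin r => iteratedDeriv (i : ℕ) (g j) x)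

/-- `k_i = λ_i - i + ℓ` (0-indexed: `k i = p i + ℓ - (i+1)`). -/
def kIdx (p : ℕ → ℕ) (ℓ i : ℕ) : ℕ := p i + ℓ - (i + 1)

/-- `∏_{1 ≤ i < j ≤ ℓ} (k_i - k_j)`. -/
def prodK (p : ℕ → ℕ) (ℓ : ℕ) : ℂ :=
  ∏ i ∈ Finset.range ℓ, ∏ j ∈ Finset.range ℓ,
    if i < j then ((kIdx p ℓ i : ℂ) - (kIdx p ℓ j : ℂ)) else 1

/-- `τ^λ(x,y) = Wr(H_{k_ℓ},…,H_{k_1})(x,y) / ∏_{i<j}(k_i-k_j)`. -/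
def tauLam (p : ℕ → ℕ) (ℓ : ℕ) (x y : ℂ) : ℂ :=
  Wr ℓ (fun j => fun t => Herm (kIdx p ℓ (ℓ - 1 - (j : ℕ))) t y) x / prodK p ℓ

/-- The exceptional Hermite polynomial
`H_n^{(λ)}(x,y) = Wr(H_{k_ℓ},…,H_{k_1},H_{n-N+ℓ}) / (∏_{i<j}(k_i-k_j) ∏_i (n-N+ℓ-k_i))`. -/
def XHP (p : ℕ → ℕ) (ℓ N n : ℕ) (x y : ℂ) : ℂ :=
  Wr (ℓ + 1)
    (fun j => if (j : ℕ) < ℓ then (fun t => Herm (kIdx p ℓ (ℓ - 1 - (j : ℕ))) t y)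
      else (fun t => Herm (n + ℓ - N) t y)) x
  / (prodK p ℓ *
      ∏ i ∈ Finset.range ℓ, ((n : ℂ) + (ℓ : ℂ) - (N : ℂ) - (kIdx p ℓ i : ℂ)))

/-- The Maya diagram `M^λ = {λ_i - i : i ≥ 1} ⊆ ℤ` (0-indexed: `p i - (i+1)`). -/
def Maya (p : ℕ → ℕ) : Set ℤ := {m | ∃ i : ℕ, m = (p i : ℤ) - ((i : ℤ) + 1)}

/-- `s(n) = ∏_{k ∈ K_N^λ} (n - k)` where `K_N^λ = {λ_i - i + N : 1 ≤ i ≤ N}`. -/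
def sFun (p : ℕ → ℕ) (N n : ℕ) : ℂ :=
  ∏ i ∈ Finset.range N, ((n : ℂ) - ((p i : ℂ) + (N : ℂ) - ((i : ℂ) + 1)))

/-! Differentiating `H_m` in `x` lowers the degree, `∂ₓⁱ H_m = m (m-1) ⋯ (m-i+1) H_{m-i}`, and
`H_m` is weighted homogeneous of degree `m`. So the `(i, j)` entry of the Wronskian at `(tx, t²y)`
is `t^(m_j - i)` times its value at `(x, y)` (both vanish when `i > m_j`), and pulling these powers
out of the determinant leaves `t^(∑ m_j - ∑ i)`. For `n ∈ I^λ` the degrees `m_j` are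
`k_ℓ, …, k_1, n - N + ℓ`, whose sum exceeds `0 + 1 + ⋯ + ℓ` by exactly `|λ| - N + n = n`. -/

theorem Matrix.det_of_pow_tsub_mul {n R : Type*} [Fintype n] [DecidableEq n] [CommRing R]
    (t : R) (w d : n → ℕ) (B : Matrix n n R) (hB : ∀ i j, d j < w i → B i j = 0) :
    det (of fun i j => t ^ (d j - w i) * B i j) = t ^ (∑ j, d j - ∑ i, w i) * det B := by
  rw [det_apply', det_apply', mul_sum]
  refine sum_congr rfl fun σ _ => ?_
  simp only [of_apply, prod_mul_distrib]
  by_cases hσ : ∀ i, w (σ i) ≤ d i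
  · have hexp : ∑ i, (d i - w (σ i)) = ∑ j, d j - ∑ i, w i := by
      rw [sum_tsub_distrib _ fun i _ => hσ i, Equiv.sum_comp σ w]
    rw [prod_pow_eq_pow_sum, hexp]
    ring
  · push Not at hσ
    obtain ⟨i, hi⟩ := hσ
    rw [prod_eq_zero (f := fun i => B (σ i) i) (mem_univ i) (hB (σ i) i hi)]
    ring

theorem herm_eq_sum (m : ℕ) (x y : ℂ) :
    Herm m x y = m.factorial * ∑ k ∈ range (m / 2 + 1),
      x ^ (m - 2 * k) / (m - 2 * k).factorial * (y ^ k / k.factorial) := by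
  unfold Herm
  congr 1
  refine sum_congr rfl fun k _ => ?_
  rw [div_mul_div_comm, mul_comm (k.factorial : ℂ)]

theorem hasDerivAt_pow_succ_div_factorial (a : ℕ) (x : ℂ) :
    HasDerivAt (fun s : ℂ => s ^ (a + 1) / (a + 1).factorial) (x ^ a / a.factorial) x := by
  refine ((hasDerivAt_pow (a + 1) x).div_const ((a + 1).factorial : ℂ)).congr_deriv ?_
  rw [Nat.factorial_succ, Nat.cast_mul, Nat.add_sub_cancel]
  field_simp

theorem hasDerivAt_herm_succ (m : ℕ) (y x : ℂ) :
    HasDerivAt (fun s => Herm (m + 1) s y) ((m + 1) * Herm m x y) x := by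
  have hterm : ∀ k ∈ range ((m + 1) / 2 + 1),
      HasDerivAt
        (fun s : ℂ => s ^ (m + 1 - 2 * k) / (m + 1 - 2 * k).factorial * (y ^ k / k.factorial))
        (if 2 * k ≤ m then x ^ (m - 2 * k) / (m - 2 * k).factorial * (y ^ k / k.factorial)
          else 0) x := by
    intro k _
    split_ifs with hk
    · rw [show m + 1 - 2 * k = m - 2 * k + 1 by omega]
      exact (hasDerivAt_pow_succ_div_factorial _ x).mul_const _
    · rw [show m + 1 - 2 * k = 0 by omega]
      simpa using hasDerivAt_const x _
  have hfilter : (range ((m + 1) / 2 + 1)).filter (fun k => 2 * k ≤ m) = range (m / 2 + 1) := by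
    ext k
    simp only [mem_filter, mem_range]
    omega
  simp only [herm_eq_sum]
  refine ((HasDerivAt.fun_sum hterm).const_mul (((m + 1).factorial : ℕ) : ℂ)).congr_deriv ?_
  rw [← sum_filter, hfilter, Nat.factorial_succ]
  push_cast
  ring

theorem iteratedDeriv_herm (i m : ℕ) (y : ℂ) :
    iteratedDeriv i (fun s => Herm m s y) = fun x => m.descFactorial i * Herm (m - i) x y := by
  induction i generalizing m with
  | zero => simp
  | succ i ih =>
    rw [iteratedDeriv_succ']
    cases m with
    | zero =>
      have hconst : (fun s => Herm 0 s y) = fun _ => 1 := by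
        funext s
        simp [Herm]
      funext x
      simp [hconst]
    | succ m =>
      rw [funext fun x => (hasDerivAt_herm_succ m y x).deriv]
      funext x
      rw [iteratedDeriv_const_mul_field, ih, Nat.succ_descFactorial_succ, Nat.add_sub_add_right]
      push_cast
      ring

theorem herm_mul_mul_sq (m : ℕ) (t x y : ℂ) :
    Herm m (t * x) (t ^ 2 * y) = t ^ m * Herm m x y := by
  rw [herm_eq_sum, herm_eq_sum, mul_left_comm (t ^ m)]
  congr 1
  rw [Finset.mul_sum]
  refine sum_congr rfl fun k hk => ?_
  have hpow : t ^ m = t ^ (m - 2 * k) * (t ^ 2) ^ k := by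
    rw [← pow_mul, ← pow_add]
    congr 1
    have := mem_range.mp hk
    omega
  rw [hpow, mul_pow, mul_pow]
  ring

theorem wr_herm_mul_mul_sq {r : ℕ} (m : Fin r → ℕ) (t x y : ℂ) :
    Wr r (fun j s => Herm (m j) s (t ^ 2 * y)) (t * x)
      = t ^ (∑ j, m j - ∑ i : Fin r, (i : ℕ)) * Wr r (fun j s => Herm (m j) s y) x := by
  unfold Wr
  simp only [iteratedDeriv_herm]
  rw [← det_of_pow_tsub_mul t (fun i : Fin r => (i : ℕ)) m]
  · congr 1
    ext i j
    simp only [of_apply, herm_mul_mul_sq]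
    ring
  · intro i j hij
    simp [Nat.descFactorial_eq_zero_iff_lt.mpr hij]

def xhpDegree (p : ℕ → ℕ) (ℓ N n j : ℕ) : ℕ :=
  if j < ℓ then kIdx p ℓ (ℓ - 1 - j) else n + ℓ - N

theorem XHP_columns (p : ℕ → ℕ) (ℓ N n : ℕ) (y : ℂ) :
    (fun j : Fin (ℓ + 1) =>
      if (j : ℕ) < ℓ then (fun s => Herm (kIdx p ℓ (ℓ - 1 - (j : ℕ))) s y)
      else (fun s => Herm (n + ℓ - N) s y)) =
      fun (j : Fin (ℓ + 1)) s => Herm (xhpDegree p ℓ N n j) s y := by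
  funext j
  unfold xhpDegree
  split_ifs <;> rfl

section Partition

variable {p : ℕ → ℕ} {ℓ N : ℕ}

theorem sum_range_length_eq (hsum : ∑ i ∈ range (N + 1), p i = N)
    (hlen : ∀ i, p i ≠ 0 ↔ i < ℓ) : ∑ i ∈ range ℓ, p i = N := by
  have hℓ : ℓ ≤ N + 1 := by
    by_contra! h
    have hpos : ∀ i ∈ range (N + 1), 1 ≤ p i := fun i hi =>
      Nat.one_le_iff_ne_zero.mpr ((hlen i).mpr (by rw [mem_range] at hi; omega))
    have := card_nsmul_le_sum _ p 1 hpos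
    simp [hsum] at this
  rw [← hsum]
  refine sum_subset (range_subset_range.mpr hℓ) fun i _ hi => ?_
  by_contra h
  exact hi (mem_range.mpr ((hlen i).mp h))

theorem sum_range_kIdx (hsum : ∑ i ∈ range (N + 1), p i = N)
    (hlen : ∀ i, p i ≠ 0 ↔ i < ℓ) :
    ∑ i ∈ range ℓ, kIdx p ℓ i = N + ∑ i ∈ range ℓ, i := by
  have hk : ∀ i ∈ range ℓ, kIdx p ℓ i = p i + (ℓ - 1 - i) := by
    intro i hi
    have hiℓ := mem_range.mp hi
    have := (hlen i).mpr hiℓ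
    rw [kIdx]
    omega
  rw [sum_congr rfl hk, sum_add_distrib, sum_range_length_eq hsum hlen,
    sum_range_reflect (fun i => i) ℓ]

/-- The parts beyond the length vanish, so `M^λ` contains every integer `< -ℓ`; hence
`n - N ∉ M^λ` forces `n - N + ℓ ≥ 0`. -/
theorem le_add_length_of_notMem_maya (hlen : ∀ i, p i ≠ 0 ↔ i < ℓ) {n : ℕ}
    (hn : (n : ℤ) - N ∉ Maya p) : N ≤ n + ℓ := by
  by_contra! h
  have hzero : p (N - n - 1) = 0 := by
    by_contra h0
    have := (hlen _).mp h0
    omega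
  refine hn ⟨N - n - 1, ?_⟩
  rw [hzero]
  push_cast
  omega

theorem sum_xhpDegree (hsum : ∑ i ∈ range (N + 1), p i = N)
    (hlen : ∀ i, p i ≠ 0 ↔ i < ℓ) {n : ℕ} (hn : (n : ℤ) - N ∉ Maya p) :
    ∑ j : Fin (ℓ + 1), xhpDegree p ℓ N n j - ∑ j : Fin (ℓ + 1), (j : ℕ) = n := by
  have hcols : ∑ j ∈ range ℓ, xhpDegree p ℓ N n j = ∑ i ∈ range ℓ, kIdx p ℓ i := by
    rw [← sum_range_reflect (fun i => kIdx p ℓ i) ℓ]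
    exact sum_congr rfl fun j hj => if_pos (mem_range.mp hj)
  have hlast : xhpDegree p ℓ N n ℓ = n + ℓ - N := if_neg (lt_irrefl ℓ)
  rw [Fin.sum_univ_eq_sum_range (xhpDegree p ℓ N n), Fin.sum_univ_eq_sum_range (fun j => j),
    sum_range_succ, sum_range_succ (fun j => j), hcols, hlast, sum_range_kIdx hsum hlen]
  have := le_add_length_of_notMem_maya hlen hn
  omega

end Partition

theorem XHP_weighted_homogeneous_general
    (p : ℕ → ℕ) (ℓ N : ℕ)
    (hsum : ∑ i ∈ Finset.range (N + 1), p i = N)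
    (hlen : ∀ i, p i ≠ 0 ↔ i < ℓ)
    (n : ℕ) (hnI : ((n : ℤ) - (N : ℤ)) ∉ Maya p) :
    ∀ t x y : ℂ, XHP p ℓ N n (t * x) (t ^ 2 * y) = t ^ n * XHP p ℓ N n x y := by
  intro t x y
  unfold XHP
  rw [XHP_columns, XHP_columns, wr_herm_mul_mul_sq, sum_xhpDegree hsum hlen hnI, mul_div_assoc]

/-- For every partition of `N`, every `n ∈ I^λ` and all `t, x, y ∈ ℂ`:
`H_n^{(λ)}(tx, t²y) = tⁿ H_n^{(λ)}(x,y)`, i.e. `H_n^{(λ)}` is homogeneous of weighted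
degree `n` with `deg x = 1`, `deg y = 2`. -/
theorem XHP_weighted_homogeneous
    (p : ℕ → ℕ) (ℓ N : ℕ)
    (hanti : Antitone p)
    (hsum : ∑ i ∈ Finset.range (N + 1), p i = N)
    (hlen : ∀ i, p i ≠ 0 ↔ i < ℓ)
    (n : ℕ) (hnI : ((n : ℤ) - (N : ℤ)) ∉ Maya p) :
    ∀ t x y : ℂ, XHP p ℓ N n (t * x) (t ^ 2 * y) = t ^ n * XHP p ℓ N n x y :=
  XHP_weighted_homogeneous_general p ℓ N hsum hlen n hnI
end
end

section
/- Let λ be a partition of N with length ℓ and index set {k_1,…,k_ℓ}, and set s(n) = ∏_{k ∈ K_N^λ} (n − k). Then for all x, y ∈ ℂ and all z ∈ ℂ: z^{N−ℓ} · Wr(H_{k_ℓ},…,H_{k_1}, f_{y,z})(x) = ( ∏_{1≤i<j≤ℓ} (k_i − k_j) ) · Σ_{n ∈ I^λ} ( s(n)/n! ) H_n^{(λ)}(x,y) z^n, where f_{y,z}(x) = e^{xz+yz²}, the Wronskian is taken with respect to x, and the series on the right converges absolutely. -/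
open Finset Matrix MeasureTheory

noncomputable section

/-!
The Wronskian is linear in its last column, so the generating function
`e^{xz+yz²} = ∑ₘ Hₘ(x,y) zᵐ/m!` passes through it:
`Wr(H_{k_ℓ},…,H_{k_1}, e^{xz+yz²}) = ∑ₘ zᵐ/m! · Wr(H_{k_ℓ},…,H_{k_1}, Hₘ)`.
The terms with `m = k_i` vanish (a repeated column). After the shift `n = m + N - ℓ` each
remaining term `z^{N-ℓ} zᵐ/m! · Wr(…, Hₘ)` equals `∏_{i<j}(k_i-k_j) · s(n)/n! · H_n^{(λ)} zⁿ`,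
because `s(n) (n-N+ℓ)! = ∏_i (n-N+ℓ-k_i) · n!`: the factors of `s(n)` with `i > ℓ` are
`n-N+ℓ+1, …, n`. The indices `n < N - ℓ` lie outside `I^λ`, since the Maya diagram contains
every integer below `-ℓ`.
-/
theorem hasSum_exp_mul_exp (u v : ℂ) :
    HasSum (fun q : ℕ × ℕ => u ^ q.1 / q.1.factorial * (v ^ q.2 / q.2.factorial))
      (Complex.exp (u + v)) := by
  have hexp (w : ℂ) : HasSum (fun n => w ^ n / (n.factorial : ℂ)) (Complex.exp w) := by
    rw [Complex.exp_eq_exp_ℂ]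
    exact NormedSpace.expSeries_div_hasSum_exp w
  have hnorm (w : ℂ) : Summable fun n => ‖w ^ n / (n.factorial : ℂ)‖ :=
    summable_norm_iff.mpr (hexp w).summable
  have hsum := summable_mul_of_summable_norm (hnorm u) (hnorm v)
  have hprod := (hexp u).mul (hexp v) hsum
  rwa [Complex.exp_add]

theorem Herm_mul_pow_div_factorial (n : ℕ) (x y z : ℂ) :
    Herm n x y * z ^ n / n.factorial = ∑ k ∈ range (n / 2 + 1),
      (x * z) ^ (n - 2 * k) / (n - 2 * k).factorial * ((y * z ^ 2) ^ k / k.factorial) := by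
  rw [Herm, mul_right_comm, mul_assoc,
    mul_div_cancel_left₀ _ (Nat.cast_ne_zero.mpr n.factorial_ne_zero), Finset.mul_sum]
  refine Finset.sum_congr rfl fun k hk => ?_
  have hz : z ^ n = z ^ (n - 2 * k) * (z ^ 2) ^ k := by
    rw [← pow_mul, ← pow_add, Nat.sub_add_cancel (by grind)]
  rw [hz]
  ring

theorem hasSum_Herm (x y z : ℂ) :
    HasSum (fun n => Herm n x y * z ^ n / n.factorial) (Complex.exp (x * z + y * z ^ 2)) := by
  set g : ℕ × ℕ → ℂ := fun q => if 2 * q.2 ≤ q.1 then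
    (x * z) ^ (q.1 - 2 * q.2) / (q.1 - 2 * q.2).factorial * ((y * z ^ 2) ^ q.2 / q.2.factorial)
    else 0
  -- `(a, b) ↦ (a + 2b, b)` carries the double exponential series onto `g`
  have hinj : Function.Injective fun q : ℕ × ℕ => (q.1 + 2 * q.2, q.2) := by
    rintro ⟨a, b⟩ ⟨c, d⟩ h
    simp only [Prod.mk.injEq] at h ⊢
    omega
  have hg : HasSum g (Complex.exp (x * z + y * z ^ 2)) := by
    refine (hinj.hasSum_iff fun q hq => if_neg fun h =>
      hq ⟨(q.1 - 2 * q.2, q.2), Prod.ext (Nat.sub_add_cancel h) rfl⟩).mp ?_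
    convert hasSum_exp_mul_exp (x * z) (y * z ^ 2) using 2 with q
    simp
  refine hg.prod_fiberwise fun n => ?_
  have hfin : HasSum (fun k => g (n, k)) (∑ k ∈ range (n / 2 + 1), g (n, k)) :=
    hasSum_sum_of_ne_finset_zero fun k hk => if_neg (by grind)
  rw [Herm_mul_pow_div_factorial]
  convert hfin using 1
  exact Finset.sum_congr rfl fun k hk => (if_pos (by grind)).symm

theorem hasDerivAt_Herm_succ (m : ℕ) (y t : ℂ) :
    HasDerivAt (fun s => Herm (m + 1) s y) ((m + 1) * Herm m t y) t := by
  have htermwise : HasDerivAt (fun s => Herm (m + 1) s y)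
      ((m + 1).factorial * ∑ k ∈ range ((m + 1) / 2 + 1), ((m + 1 - 2 * k : ℕ) : ℂ) *
        t ^ (m - 2 * k) * y ^ k / (k.factorial * (m + 1 - 2 * k).factorial)) t := by
    unfold Herm
    refine .const_mul _ (.fun_sum fun k _ => ?_)
    have h := ((hasDerivAt_pow (m + 1 - 2 * k) t).mul_const (y ^ k)).div_const
      ((k.factorial : ℂ) * (m + 1 - 2 * k).factorial)
    rwa [show m + 1 - 2 * k - 1 = m - 2 * k by omega] at h
  convert htermwise using 1
  have hrange : range (m / 2 + 1) ⊆ range ((m + 1) / 2 + 1) := by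
    gcongr
    omega
  rw [Herm, ← sum_subset hrange, mul_sum, mul_sum, mul_sum]
  · refine sum_congr rfl fun k hk => ?_
    have h2k : 2 * k ≤ m := by grind
    rw [Nat.sub_add_comm h2k, Nat.factorial_succ (m - 2 * k), Nat.factorial_succ m]
    push_cast
    field_simp
    exact (mul_div_mul_right _ _ (Nat.cast_add_one_ne_zero _)).symm
  · intro k _ hk
    rw [show m + 1 - 2 * k = 0 by grind]
    simp

theorem hasDerivAt_Herm (m : ℕ) (y t : ℂ) :
    HasDerivAt (fun s => Herm m s y) (m * Herm (m - 1) t y) t := by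
  cases m with
  | zero => simpa [Herm] using hasDerivAt_const t (1 : ℂ)
  | succ m => simpa using hasDerivAt_Herm_succ m y t

theorem iteratedDeriv_Herm (i m : ℕ) (y : ℂ) :
    iteratedDeriv i (fun t => Herm m t y) = fun t => m.descFactorial i * Herm (m - i) t y := by
  induction i with
  | zero => simp
  | succ i ih =>
    ext t
    rw [iteratedDeriv_succ, ih, ((hasDerivAt_Herm (m - i) y t).const_mul _).deriv,
      Nat.descFactorial_succ, Nat.sub_sub]
    push_cast
    ring

theorem iteratedDeriv_cexp_mul_add (i : ℕ) (z c : ℂ) :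
    iteratedDeriv i (fun t => Complex.exp (t * z + c)) =
      fun t => z ^ i * Complex.exp (t * z + c) := by
  induction i with
  | zero => simp
  | succ i ih =>
    ext t
    have hlin : HasDerivAt (fun s => s * z + c) z t := by
      simpa using ((hasDerivAt_id t).mul_const z).add_const c
    rw [iteratedDeriv_succ, ih, (hlin.cexp.const_mul _).deriv, pow_succ]
    ring

theorem hasSum_descFactorial_mul_Herm (i : ℕ) (x y z : ℂ) :
    HasSum (fun m => z ^ m / m.factorial * (m.descFactorial i * Herm (m - i) x y))
      (z ^ i * Complex.exp (x * z + y * z ^ 2)) := by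
  have hlow : ∑ m ∈ range i, z ^ m / m.factorial * (m.descFactorial i * Herm (m - i) x y) = 0 :=
    sum_eq_zero fun m hm => by simp [Nat.descFactorial_eq_zero_iff_lt.mpr (mem_range.mp hm)]
  rw [← hasSum_nat_add_iff' i, hlow, sub_zero]
  refine ((hasSum_Herm x y z).mul_left (z ^ i)).congr_fun fun n => ?_
  have hfac : ((n + i).factorial : ℂ) = n.factorial * (n + i).descFactorial i := by
    have h := Nat.factorial_mul_descFactorial (Nat.le_add_left i n)
    rw [Nat.add_sub_cancel] at h
    exact_mod_cast h.symm
  rw [hfac, Nat.add_sub_cancel, pow_add]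
  have : ((n + i).descFactorial i : ℂ) ≠ 0 := by simp [Nat.descFactorial_eq_zero_iff_lt]
  field_simp

theorem hasSum_det_updateCol {𝕜 n : Type*} [NontriviallyNormedField 𝕜] [CompleteSpace 𝕜]
    [Fintype n] [DecidableEq n] (A : Matrix n n 𝕜) (j : n) {c : ℕ → 𝕜} {v : ℕ → n → 𝕜}
    {w : n → 𝕜} (h : HasSum (fun m => c m • v m) w) :
    HasSum (fun m => c m * (A.updateCol j (v m)).det) (A.updateCol j w).det := by
  let L : (n → 𝕜) →ₗ[𝕜] 𝕜 := LinearMap.proj j ∘ₗ cramer A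
  have hL (u : n → 𝕜) : L u = (A.updateCol j u).det := cramer_apply A u j
  simpa only [Function.comp_def, hL, det_updateCol_smul] using
    h.map L L.continuous_of_finiteDimensional

section Wronskian

variable {ℓ : ℕ} (g : ℕ → ℂ → ℂ)

theorem Wr_eq_det_updateCol (f f₀ : ℂ → ℂ) (x : ℂ) :
    Wr (ℓ + 1) (fun j => if (j : ℕ) < ℓ then g j else f) x =
      ((of fun i j : Fin (ℓ + 1) => iteratedDeriv i (if (j : ℕ) < ℓ then g j else f₀) x).updateCol
        (Fin.last ℓ) fun i => iteratedDeriv i f x).det := by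
  unfold Wr
  congr 1
  ext i j
  rcases Fin.eq_castSucc_or_eq_last j with ⟨j, rfl⟩ | rfl
  · simp [Fin.castSucc_ne_last]
  · simp

theorem hasSum_Wr_of_hasSum_iteratedDeriv {f : ℕ → ℂ → ℂ} {F : ℂ → ℂ} {c : ℕ → ℂ} {x : ℂ}
    (h : ∀ i, HasSum (fun m => c m * iteratedDeriv i (f m) x) (iteratedDeriv i F x)) :
    HasSum (fun m => c m * Wr (ℓ + 1) (fun j => if (j : ℕ) < ℓ then g j else f m) x)
      (Wr (ℓ + 1) (fun j => if (j : ℕ) < ℓ then g j else F) x) := by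
  simp only [Wr_eq_det_updateCol g _ F]
  exact hasSum_det_updateCol _ _ (Pi.hasSum.mpr fun i => h i)

theorem Wr_eq_zero_of_repeated_col {i : ℕ} (hi : i < ℓ) (x : ℂ) :
    Wr (ℓ + 1) (fun j => if (j : ℕ) < ℓ then g j else g i) x = 0 :=
  det_zero_of_column_eq (i := ⟨i, by omega⟩) (j := Fin.last ℓ) (Fin.ne_of_lt hi)
    fun r => by simp [hi]

theorem hasSum_Wr_Herm (x y z : ℂ) :
    HasSum (fun m => z ^ m / m.factorial *
        Wr (ℓ + 1) (fun j => if (j : ℕ) < ℓ then g j else fun t => Herm m t y) x)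
      (Wr (ℓ + 1) (fun j => if (j : ℕ) < ℓ then g j else fun t => Complex.exp (t * z + y * z ^ 2))
        x) :=
  hasSum_Wr_of_hasSum_iteratedDeriv g fun i => by
    simpa only [iteratedDeriv_Herm, iteratedDeriv_cexp_mul_add] using
      hasSum_descFactorial_mul_Herm i x y z

end Wronskian

section Partition

variable {p : ℕ → ℕ} {ℓ N : ℕ}

theorem length_le_of_sum_eq (hsum : ∑ i ∈ range (N + 1), p i = N)
    (hlen : ∀ i, p i ≠ 0 ↔ i < ℓ) : ℓ ≤ N := by
  by_contra! h
  have hpos : ∑ _i ∈ range (N + 1), 1 ≤ ∑ i ∈ range (N + 1), p i :=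
    sum_le_sum fun i hi => Nat.one_le_iff_ne_zero.mpr ((hlen i).mpr (by grind))
  simp only [sum_const, card_range, smul_eq_mul, mul_one] at hpos
  omega

theorem kIdx_lt_kIdx (hanti : Antitone p) {i j : ℕ} (hij : i < j) (hj : j < ℓ) :
    kIdx p ℓ j < kIdx p ℓ i := by
  have := hanti hij.le
  unfold kIdx
  omega

theorem prodK_ne_zero (hanti : Antitone p) : prodK p ℓ ≠ 0 :=
  prod_ne_zero_iff.mpr fun i _ => prod_ne_zero_iff.mpr fun j hj => by
    split_ifs with hij
    · exact sub_ne_zero.mpr (Nat.cast_injective.ne (kIdx_lt_kIdx hanti hij (mem_range.mp hj)).ne')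
    · exact one_ne_zero

theorem eq_zero_of_length_le (hlen : ∀ i, p i ≠ 0 ↔ i < ℓ) {i : ℕ} (hi : ℓ ≤ i) : p i = 0 :=
  not_not.mp ((hlen i).not.mpr hi.not_gt)

theorem neg_mem_Maya (hlen : ∀ i, p i ≠ 0 ↔ i < ℓ) {j : ℕ} (hj : ℓ < j) : -(j : ℤ) ∈ Maya p :=
  ⟨j - 1, by rw [eq_zero_of_length_le hlen (by omega : ℓ ≤ j - 1)]; push_cast; omega⟩

theorem sub_mem_Maya_iff (hlen : ∀ i, p i ≠ 0 ↔ i < ℓ) (m : ℕ) :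
    (m : ℤ) - ℓ ∈ Maya p ↔ ∃ i < ℓ, m = kIdx p ℓ i := by
  constructor
  · rintro ⟨i, hi⟩
    have hiℓ : i < ℓ := by
      by_contra! h
      rw [eq_zero_of_length_le hlen h] at hi
      omega
    exact ⟨i, hiℓ, by unfold kIdx; omega⟩
  · rintro ⟨i, hi, rfl⟩
    exact ⟨i, by unfold kIdx; omega⟩

theorem sFun_add_mul_factorial (hlen : ∀ i, p i ≠ 0 ↔ i < ℓ) (hℓN : ℓ ≤ N) (m : ℕ) :
    sFun p N (m + (N - ℓ)) * m.factorial =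
      (∏ i ∈ range ℓ, ((m : ℂ) - kIdx p ℓ i)) * (m + (N - ℓ)).factorial := by
  have hhead : ∏ i ∈ range ℓ, ((↑(m + (N - ℓ)) : ℂ) - (p i + N - (i + 1))) =
      ∏ i ∈ range ℓ, ((m : ℂ) - kIdx p ℓ i) := prod_congr rfl fun i hi => by
    rw [kIdx, Nat.cast_sub (by grind)]
    push_cast [Nat.cast_sub hℓN]
    ring
  have htail : ∏ i ∈ Ico ℓ N, ((↑(m + (N - ℓ)) : ℂ) - (p i + N - (i + 1))) =
      (m + 1).ascFactorial (N - ℓ) := by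
    rw [prod_Ico_eq_prod_range, Nat.ascFactorial_eq_prod_range, Nat.cast_prod]
    refine prod_congr rfl fun j _ => ?_
    rw [eq_zero_of_length_le hlen (Nat.le_add_right ℓ j)]
    push_cast [Nat.cast_sub hℓN]
    ring
  rw [sFun, ← prod_range_mul_prod_Ico _ hℓN, hhead, htail, ← Nat.factorial_mul_ascFactorial]
  push_cast
  ring

theorem XHP_add_eq_Wr_div (hℓN : ℓ ≤ N) (m : ℕ) (x y : ℂ) :
    XHP p ℓ N (m + (N - ℓ)) x y =
      Wr (ℓ + 1) (fun j => if (j : ℕ) < ℓ then (fun t => Herm (kIdx p ℓ (ℓ - 1 - (j : ℕ))) t y)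
        else fun t => Herm m t y) x / (prodK p ℓ * ∏ i ∈ range ℓ, ((m : ℂ) - kIdx p ℓ i)) := by
  rw [XHP, show m + (N - ℓ) + ℓ - N = m by omega]
  congr 3 with i
  push_cast [Nat.cast_sub hℓN]
  ring

end Partition

/-- The `k`-th term of the series `∑_{n ∈ I^λ} (s(n)/n!) H_n^{(λ)}(x,y) zⁿ`. -/
def xhpTerm (p : ℕ → ℕ) (ℓ N : ℕ) (x y z : ℂ) (k : ℕ) : ℂ :=
  {k : ℕ | ((k : ℤ) - (N : ℤ)) ∉ Maya p}.indicator
    (fun k => sFun p N k * XHP p ℓ N k x y * z ^ k / (k.factorial : ℂ)) k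

section Series

variable {p : ℕ → ℕ} {ℓ N : ℕ}

theorem xhpTerm_of_lt (hlen : ∀ i, p i ≠ 0 ↔ i < ℓ) (x y z : ℂ) {k : ℕ} (hk : k < N - ℓ) :
    xhpTerm p ℓ N x y z k = 0 := by
  have hNk : (k : ℤ) - N = -((N - k : ℕ) : ℤ) := by omega
  exact Set.indicator_of_notMem (not_not.mpr (hNk ▸ neg_mem_Maya hlen (by omega))) _

theorem xhpTerm_add (hlen : ∀ i, p i ≠ 0 ↔ i < ℓ) (hℓN : ℓ ≤ N) (x y z : ℂ) (m : ℕ) :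
    xhpTerm p ℓ N x y z (m + (N - ℓ)) = (prodK p ℓ)⁻¹ * (z ^ (N - ℓ) * (z ^ m / m.factorial *
      Wr (ℓ + 1) (fun j => if (j : ℕ) < ℓ then (fun t => Herm (kIdx p ℓ (ℓ - 1 - (j : ℕ))) t y)
        else fun t => Herm m t y) x)) := by
  have hshift : ((m + (N - ℓ) : ℕ) : ℤ) - N = m - ℓ := by omega
  rw [xhpTerm]
  by_cases hm : (m : ℤ) - ℓ ∈ Maya p
  · obtain ⟨i, hi, rfl⟩ := (sub_mem_Maya_iff hlen m).mp hm
    have hW := Wr_eq_zero_of_repeated_col (fun j t => Herm (kIdx p ℓ (ℓ - 1 - j)) t y)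
      (ℓ := ℓ) (i := ℓ - 1 - i) (by omega) x
    rw [Nat.sub_sub_self (by omega)] at hW
    rw [Set.indicator_of_notMem (by simpa only [Set.mem_ofPred_eq, not_not, hshift]), hW]
    simp
  · have hP : ∏ i ∈ range ℓ, ((m : ℂ) - kIdx p ℓ i) ≠ 0 :=
      prod_ne_zero_iff.mpr fun i hi => sub_ne_zero.mpr fun h =>
        hm ((sub_mem_Maya_iff hlen m).mpr ⟨i, mem_range.mp hi, Nat.cast_injective h⟩)
    have hfac (n : ℕ) : (n.factorial : ℂ) ≠ 0 := Nat.cast_ne_zero.mpr n.factorial_ne_zero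
    rw [Set.indicator_of_mem (by simpa only [Set.mem_ofPred_eq, hshift]), XHP_add_eq_Wr_div hℓN,
      eq_div_of_mul_eq (hfac m) (sFun_add_mul_factorial hlen hℓN m), pow_add]
    field_simp
    simp only [mul_assoc]
    exact mul_div_mul_left _ _ (hfac _)

theorem hasSum_xhpTerm (hsum : ∑ i ∈ range (N + 1), p i = N) (hlen : ∀ i, p i ≠ 0 ↔ i < ℓ)
    (x y z : ℂ) :
    HasSum (xhpTerm p ℓ N x y z) ((prodK p ℓ)⁻¹ * (z ^ (N - ℓ) *
      Wr (ℓ + 1) (fun j => if (j : ℕ) < ℓ then (fun t => Herm (kIdx p ℓ (ℓ - 1 - (j : ℕ))) t y)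
        else fun t => Complex.exp (t * z + y * z ^ 2)) x)) := by
  have hℓN := length_le_of_sum_eq hsum hlen
  rw [← hasSum_nat_add_iff' (N - ℓ),
    sum_eq_zero fun k hk => xhpTerm_of_lt hlen x y z (mem_range.mp hk), sub_zero]
  have := ((hasSum_Wr_Herm (ℓ := ℓ) (fun j t => Herm (kIdx p ℓ (ℓ - 1 - j)) t y) x y z).mul_left
    (z ^ (N - ℓ))).mul_left (prodK p ℓ)⁻¹
  exact this.congr_fun fun m => xhpTerm_add hlen hℓN x y z m

end Series

/-- For a partition `λ` of `N` of length `ℓ`, all `x, y, z ∈ ℂ`: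
`z^{N-ℓ} Wr(H_{k_ℓ},…,H_{k_1}, e^{xz+yz²})(x)
  = (∏_{i<j}(k_i-k_j)) Σ_{n ∈ I^λ} (s(n)/n!) H_n^{(λ)}(x,y) zⁿ`,
with the series converging absolutely. -/
theorem XHP_generating_series
    (p : ℕ → ℕ) (ℓ N : ℕ)
    (hanti : Antitone p)
    (hsum : ∑ i ∈ Finset.range (N + 1), p i = N)
    (hlen : ∀ i, p i ≠ 0 ↔ i < ℓ)
    (x y z : ℂ) :
    Summable ({k : ℕ | ((k : ℤ) - (N : ℤ)) ∉ Maya p}.indicator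
        fun k => sFun p N k * XHP p ℓ N k x y * z ^ k / (k.factorial : ℂ)) ∧
    z ^ (N - ℓ) *
        Wr (ℓ + 1)
          (fun j => if (j : ℕ) < ℓ then (fun t => Herm (kIdx p ℓ (ℓ - 1 - (j : ℕ))) t y)
            else (fun t => Complex.exp (t * z + y * z ^ 2))) x
      = prodK p ℓ *
          ∑' k : ℕ, {k : ℕ | ((k : ℤ) - (N : ℤ)) ∉ Maya p}.indicator
            (fun k => sFun p N k * XHP p ℓ N k x y * z ^ k / (k.factorial : ℂ)) k := by
  have h := hasSum_xhpTerm hsum hlen x y z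
  exact ⟨h.summable,
    (mul_inv_cancel_left₀ (prodK_ne_zero hanti) _).symm.trans (congrArg _ h.tsum_eq.symm)⟩
end
end

section
/- Let X, Z be N×N complex matrices, b a column vector and a a row vector with XZ − ZX − I = b a. Then for all x, z ∈ ℂ such that xI − Z and zI − X are invertible: b^T (xI − Z^T)^{-1} (zI − X^T)^{-1} a^T = a (zI − X)^{-1} (xI − Z)^{-1} b. Consequently the stationary wave functions Ψ^{(Z^T,X^T)}(x, z) = (1 + b^T (xI − Z^T)^{-1}(zI − X^T)^{-1} a^T) e^{xz} and Ψ^{(X,Z)}(z, x) = (1 + a (zI − X)^{-1}(xI − Z)^{-1} b) e^{xz} are equal; i.e. the bispectral involution (X,Z) ↦ (Z^T, X^T) exchanges the two variables of the stationary wave function. -/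
open Matrix

/-- If `XZ - ZX - I = b a`, then for all `x, z` with `xI - Z` and
`zI - X` invertible, `bᵀ(xI - Zᵀ)⁻¹(zI - Xᵀ)⁻¹aᵀ = a(zI - X)⁻¹(xI - Z)⁻¹b`, hence the
stationary wave functions `Ψ^{(Zᵀ,Xᵀ)}(x,z)` and `Ψ^{(X,Z)}(z,x)` coincide: the
bispectral involution `(X,Z) ↦ (Zᵀ,Xᵀ)` exchanges the two variables. -/
theorem bispectral_involution_exchanges_variables (N : ℕ)
    (X Z : Matrix (Fin N) (Fin N) ℂ) (b a : Fin N → ℂ)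
    (h : X * Z - Z * X - 1 = Matrix.vecMulVec b a)
    (x z : ℂ)
    (hxZ : IsUnit (x • (1 : Matrix (Fin N) (Fin N) ℂ) - Z).det)
    (hzX : IsUnit (z • (1 : Matrix (Fin N) (Fin N) ℂ) - X).det) :
    b ⬝ᵥ (((x • (1 : Matrix (Fin N) (Fin N) ℂ) - Zᵀ)⁻¹
          * (z • (1 : Matrix (Fin N) (Fin N) ℂ) - Xᵀ)⁻¹).mulVec a)
      = a ⬝ᵥ (((z • (1 : Matrix (Fin N) (Fin N) ℂ) - X)⁻¹
          * (x • (1 : Matrix (Fin N) (Fin N) ℂ) - Z)⁻¹).mulVec b) ∧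
    (1 + b ⬝ᵥ (((x • (1 : Matrix (Fin N) (Fin N) ℂ) - Zᵀ)⁻¹
          * (z • (1 : Matrix (Fin N) (Fin N) ℂ) - Xᵀ)⁻¹).mulVec a)) * Complex.exp (x * z)
      = (1 + a ⬝ᵥ (((z • (1 : Matrix (Fin N) (Fin N) ℂ) - X)⁻¹
          * (x • (1 : Matrix (Fin N) (Fin N) ℂ) - Z)⁻¹).mulVec b)) * Complex.exp (x * z) := by
  have key : b ⬝ᵥ (((x • (1 : Matrix (Fin N) (Fin N) ℂ) - Zᵀ)⁻¹
          * (z • (1 : Matrix (Fin N) (Fin N) ℂ) - Xᵀ)⁻¹).mulVec a)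
      = a ⬝ᵥ (((z • (1 : Matrix (Fin N) (Fin N) ℂ) - X)⁻¹
          * (x • (1 : Matrix (Fin N) (Fin N) ℂ) - Z)⁻¹).mulVec b) := by
    have hZ : x • (1 : Matrix (Fin N) (Fin N) ℂ) - Zᵀ
        = (x • (1 : Matrix (Fin N) (Fin N) ℂ) - Z)ᵀ := by
      rw [transpose_sub, transpose_smul, transpose_one]
    have hX : z • (1 : Matrix (Fin N) (Fin N) ℂ) - Xᵀ
        = (z • (1 : Matrix (Fin N) (Fin N) ℂ) - X)ᵀ := by
      rw [transpose_sub, transpose_smul, transpose_one]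
    rw [hZ, hX, ← transpose_nonsing_inv, ← transpose_nonsing_inv, ← transpose_mul,
      mulVec_transpose, dotProduct_comm, dotProduct_mulVec]
  exact ⟨key, by rw [key]⟩
end
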